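/- arXiv:1709.08152 — 7 statements merged into one kernel-verified Lean document; each statement's English description precedes it below -/
import Mathlib

section
/- Let S ⊆ ℤ^d be a finitely generated subsemigroup with S - S = ℤ^d and S ≠ ℤ^d, and let a be the sum of a generating set of S. Then -k•a ∉ S for every integer k ≥ 1. -/
/-! If `-k • a ∈ S` then `-a ∈ S`, since `(k - 1) • a ∈ S`. Each `-eᵢ` is `-a` plus the sum of the
other generators, so `S` is closed under negation, i.e. a group; then `S = S - S = ℤ^d`. -/

namespace AddSubmonoid

variable {G : Type*} [AddCommGroup G]

theorem neg_mem_of_neg_nsmul_mem {S : AddSubmonoid G} {a : G} (ha : a ∈ S) {k : ℕ} (hk : 1 ≤ k)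
    (h : -(k • a) ∈ S) : -a ∈ S := by
  obtain ⟨m, rfl⟩ := Nat.exists_eq_add_of_le' hk
  convert S.add_mem h (S.nsmul_mem ha m) using 1
  rw [succ_nsmul]
  abel

theorem neg_mem_closure_range_of_neg_sum_mem {ι : Type*} [Fintype ι] [DecidableEq ι] (e : ι → G)
    (h : -(∑ i, e i) ∈ closure (Set.range e)) (i : ι) : -e i ∈ closure (Set.range e) := by
  have hrest : ∑ j ∈ Finset.univ.erase i, e j ∈ closure (Set.range e) :=
    _root_.sum_mem fun j _ => subset_closure ⟨j, rfl⟩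
  convert add_mem h hrest using 1
  rw [← Finset.add_sum_erase _ _ (Finset.mem_univ i)]
  abel

theorem neg_mem_closure_of_forall_neg_mem {s : Set G} (hs : ∀ x ∈ s, -x ∈ closure s) {x : G}
    (hx : x ∈ closure s) : -x ∈ closure s := by
  induction hx using closure_induction with
  | mem y hy => exact hs y hy
  | zero => simp
  | add y z _ _ hy hz => simpa [neg_add_rev] using add_mem hz hy

theorem eq_top_of_neg_mem_of_forall_eq_sub {S : AddSubmonoid G} (hneg : ∀ x ∈ S, -x ∈ S)
    (hsub : ∀ x : G, ∃ s ∈ S, ∃ t ∈ S, x = s - t) : S = ⊤ := by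
  refine eq_top_iff.mpr fun x _ => ?_
  obtain ⟨s, hs, t, ht, rfl⟩ := hsub x
  simpa [sub_eq_add_neg] using S.add_mem hs (hneg t ht)

end AddSubmonoid

theorem stmt_1 (d r : ℕ) (S : AddSubmonoid (Fin d → ℤ)) (e : Fin r → (Fin d → ℤ))
    (hgen : S = AddSubmonoid.closure (Set.range e))
    (hgrp : ∀ x : Fin d → ℤ, ∃ s ∈ S, ∃ t ∈ S, x = s - t)
    (hne : (S : Set (Fin d → ℤ)) ≠ Set.univ)
    (a : Fin d → ℤ) (ha : a = ∑ i, e i) :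
    ∀ k : ℕ, 1 ≤ k → -(k • a) ∉ S := by
  subst hgen ha
  intro k hk hmem
  have hsum : ∑ i, e i ∈ AddSubmonoid.closure (Set.range e) :=
    sum_mem fun i _ => AddSubmonoid.subset_closure ⟨i, rfl⟩
  have hneg_gen : ∀ x ∈ Set.range e, -x ∈ AddSubmonoid.closure (Set.range e) := by
    rintro _ ⟨i, rfl⟩
    exact AddSubmonoid.neg_mem_closure_range_of_neg_sum_mem e
      (AddSubmonoid.neg_mem_of_neg_nsmul_mem hsum hk hmem) i
  have htop := AddSubmonoid.eq_top_of_neg_mem_of_forall_eq_sub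
    (fun x hx => AddSubmonoid.neg_mem_closure_of_forall_neg_mem hneg_gen hx) hgrp
  exact hne (by rw [htop, AddSubmonoid.coe_top])
end

section
/- Let S ⊆ ℤ^d be a finitely generated subsemigroup with S - S = ℤ^d and S ≠ ℤ^d, and let a be the sum of a set of generators. Then the intersection ⋂_{n≥0} (S + n•a) is empty. -/
/-!
Since `a - e i` is the sum of the other generators, every `s ∈ S` satisfies `n • a - s ∈ S` for
some `n`. If `x ∈ S + n • a` for every `n`, write an arbitrary `y` as `x - (s - t)` with
`s, t ∈ S`; choosing `x = u + n • a` for that `n` gives `y = u + (n • a - s) + t ∈ S`,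
so `S` would be the whole group.
-/

open Set

theorem AddSubmonoid.exists_nsmul_sum_sub_mem_closure {M ι : Type*} [AddCommGroup M] [Fintype ι]
    [DecidableEq ι] (e : ι → M) {s : M} (hs : s ∈ closure (range e)) :
    ∃ n : ℕ, n • ∑ i, e i - s ∈ closure (range e) := by
  induction hs using closure_induction with
  | mem x hx =>
    obtain ⟨i, rfl⟩ := hx
    refine ⟨1, ?_⟩
    rw [one_smul, ← Finset.sum_erase_eq_sub (Finset.mem_univ i)]
    exact AddSubmonoid.sum_mem _ fun j _ => subset_closure (mem_range_self j)
  | zero => exact ⟨0, by simp⟩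
  | add x y _ _ ihx ihy =>
    obtain ⟨n, hn⟩ := ihx
    obtain ⟨m, hm⟩ := ihy
    refine ⟨n + m, ?_⟩
    have hsplit : (n + m) • ∑ i, e i - (x + y) = (n • ∑ i, e i - x) + (m • ∑ i, e i - y) := by
      rw [add_nsmul]; abel
    rw [hsplit]
    exact add_mem hn hm

theorem AddSubmonoid.eq_top_of_forall_mem_add_nsmul {G : Type*} [AddCommGroup G]
    (S : AddSubmonoid G) (hgrp : ∀ x : G, ∃ s ∈ S, ∃ t ∈ S, x = s - t) {a : G}
    (hdom : ∀ s ∈ S, ∃ n : ℕ, n • a - s ∈ S) {x : G} (hx : ∀ n : ℕ, ∃ u ∈ S, u + n • a = x) :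
    S = ⊤ := by
  refine eq_top_iff.2 fun y _ => ?_
  obtain ⟨s, hs, t, ht, hst⟩ := hgrp (x - y)
  obtain ⟨n, hn⟩ := hdom s hs
  obtain ⟨u, hu, rfl⟩ := hx n
  have hy : y = u + (n • a - s) + t :=
    calc y = u + n • a - (s - t) := by rw [← hst]; abel
      _ = u + (n • a - s) + t := by abel
  rw [hy]
  exact S.add_mem (S.add_mem hu hn) ht

theorem stmt_2 (d r : ℕ) (S : AddSubmonoid (Fin d → ℤ)) (e : Fin r → (Fin d → ℤ))
    (hgen : S = AddSubmonoid.closure (Set.range e))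
    (hgrp : ∀ x : Fin d → ℤ, ∃ s ∈ S, ∃ t ∈ S, x = s - t)
    (hne : (S : Set (Fin d → ℤ)) ≠ Set.univ)
    (a : Fin d → ℤ) (ha : a = ∑ i, e i) :
    ⋂ n : ℕ, (fun s => s + n • a) '' (S : Set (Fin d → ℤ)) = ∅ := by
  have hdom : ∀ s ∈ S, ∃ n : ℕ, n • a - s ∈ S := by
    subst hgen ha
    exact fun s hs => AddSubmonoid.exists_nsmul_sum_sub_mem_closure e hs
  refine eq_empty_iff_forall_notMem.2 fun x hx => hne ?_
  simp only [mem_iInter, mem_image, SetLike.mem_coe] at hx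
  rw [S.eq_top_of_forall_mem_add_nsmul hgrp hdom hx, AddSubmonoid.coe_top]
end

section
/- With S, a, L_k as above, for each k ≥ 0 the element k•a belongs to L_k, and S + k•a equals the disjoint union of L_m over m ≥ k. -/
/-! The translates `S + k • a` decrease in `k` because `a ∈ S`, so the layers `L k` are pairwise
disjoint, and `S + k • a` is the union of the layers `L m`, `m ≥ k`, as soon as no point lies in
every translate. Such a point `x` would give `-a ∈ S`: since `a - e i ∈ S` for every generator,
`n • a - x ∈ S` for some `n`, and writing `x = s' + (n + 1) • a` gives `-a = s' + (n • a - x)`.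
But `-a ∈ S` makes `S` closed under negation, hence equal to `S - S = ℤ^d`. The same fact
`-a ∉ S` shows `k • a ∉ S + (k + 1) • a`. -/

open Set

theorem Antitone.pairwise_disjoint_sdiff_succ {α : Type*} [GeneralizedBooleanAlgebra α]
    {T : ℕ → α} (hT : Antitone T) : Pairwise (Function.onFun Disjoint fun m => T m \ T (m + 1)) :=
  (pairwise_disjoint_on _).2 fun m n hmn =>
    (disjoint_sdiff_self_left (y := T m) (x := T (m + 1))).mono_right
      (sdiff_le.trans (hT (hmn : m + 1 ≤ n)))

theorem Antitone.biUnion_sdiff_succ_eq {α : Type*} {T : ℕ → Set α} (hT : Antitone T)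
    (hT₀ : ⋂ m, T m = ∅) (k : ℕ) : ⋃ m ∈ {m : ℕ | k ≤ m}, T m \ T (m + 1) = T k := by
  refine Subset.antisymm (iUnion₂_subset fun m hm => sdiff_subset.trans (hT hm)) fun x hx => ?_
  have hleave : ∃ n, x ∉ T n := by
    by_contra! h
    simpa [hT₀] using mem_iInter.2 h
  classical
  set n := Nat.find hleave
  have hkn : k < n := lt_of_not_ge fun hnk => Nat.find_spec hleave (hT hnk hx)
  obtain ⟨m, hm⟩ : ∃ m, n = m + 1 := Nat.exists_eq_succ_of_ne_zero (by omega)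
  refine mem_biUnion (x := m) (show k ≤ m by omega) ⟨?_, hm ▸ Nat.find_spec hleave⟩
  exact not_not.1 (Nat.find_min hleave (by omega))

namespace AddSubmonoid

variable {M : Type*} [AddCommGroup M]

theorem exists_nsmul_sub_mem_closure {s : Set M} {a : M} (hs : ∀ x ∈ s, a - x ∈ closure s)
    {t : M} (ht : t ∈ closure s) : ∃ n : ℕ, n • a - t ∈ closure s := by
  induction ht using closure_induction with
  | mem x hx => exact ⟨1, by simpa using hs x hx⟩
  | zero => exact ⟨0, by simp⟩
  | add x y _ _ hx hy =>
    obtain ⟨n₁, h₁⟩ := hx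
    obtain ⟨n₂, h₂⟩ := hy
    refine ⟨n₁ + n₂, ?_⟩
    convert add_mem h₁ h₂ using 1
    rw [add_nsmul]
    abel

theorem sum_sub_mem_closure_range {ι : Type*} [Fintype ι] (e : ι → M) (i : ι) :
    ∑ j, e j - e i ∈ closure (range e) := by
  classical
  rw [← Finset.add_sum_erase _ _ (Finset.mem_univ i), add_sub_cancel_left]
  exact sum_mem _ fun j _ => subset_closure (mem_range_self j)

variable (S : AddSubmonoid M) {a : M}

theorem neg_mem_of_neg_mem_of_exists_nsmul_sub_mem (hS : ∀ t ∈ S, ∃ n : ℕ, n • a - t ∈ S)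
    (hna : -a ∈ S) {t : M} (ht : t ∈ S) : -t ∈ S := by
  obtain ⟨n, hn⟩ := hS t ht
  convert add_mem hn (nsmul_mem hna n) using 1
  rw [smul_neg]
  abel

theorem coe_eq_univ_of_neg_mem (hgrp : ∀ x : M, ∃ s ∈ S, ∃ t ∈ S, x = s - t)
    (hneg : ∀ t ∈ S, -t ∈ S) : (S : Set M) = univ := by
  refine eq_univ_of_forall fun x => ?_
  obtain ⟨s, hs, t, ht, rfl⟩ := hgrp x
  exact sub_eq_add_neg s t ▸ add_mem hs (hneg t ht)

theorem antitone_image_add_nsmul (ha : a ∈ S) :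
    Antitone fun k : ℕ => (fun s => s + k • a) '' (S : Set M) := by
  rintro p q hpq _ ⟨s, hs, rfl⟩
  obtain ⟨c, rfl⟩ := Nat.exists_eq_add_of_le hpq
  refine ⟨s + c • a, add_mem hs (nsmul_mem ha c), ?_⟩
  simp only [add_nsmul]
  abel

theorem nsmul_mem_image_add_nsmul_diff (hna : -a ∉ S) (k : ℕ) :
    k • a ∈ (fun s => s + k • a) '' (S : Set M) \ (fun s => s + (k + 1) • a) '' (S : Set M) := by
  refine ⟨⟨0, zero_mem S, zero_add _⟩, ?_⟩
  rintro ⟨s, hs, hsk⟩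
  simp only at hsk
  obtain rfl : s = -a := by
    calc s = s + (k + 1) • a - k • a - a := by rw [succ_nsmul]; abel
      _ = -a := by rw [hsk]; abel
  exact hna hs

theorem iInter_image_add_nsmul_eq_empty (hS : ∀ t ∈ S, ∃ n : ℕ, n • a - t ∈ S) (hna : -a ∉ S) :
    ⋂ k : ℕ, (fun s => s + k • a) '' (S : Set M) = ∅ := by
  refine eq_empty_of_forall_notMem fun x hx => hna ?_
  rw [mem_iInter] at hx
  obtain ⟨x', hx', rfl⟩ := hx 0
  obtain ⟨n, hn⟩ := hS _ (by simpa using hx')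
  obtain ⟨s, hs, hsx⟩ := hx (n + 1)
  convert add_mem hs hn using 1
  rw [← sub_eq_of_eq_add hsx.symm]
  simp only [zero_smul, add_zero, add_nsmul, one_nsmul]
  abel

end AddSubmonoid

theorem stmt_7 (d r : ℕ) (S : AddSubmonoid (Fin d → ℤ)) (e : Fin r → (Fin d → ℤ))
    (hgen : S = AddSubmonoid.closure (Set.range e))
    (hgrp : ∀ x : Fin d → ℤ, ∃ s ∈ S, ∃ t ∈ S, x = s - t)
    (hne : (S : Set (Fin d → ℤ)) ≠ Set.univ)
    (a : Fin d → ℤ) (ha : a = ∑ i, e i)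
    (L : ℕ → Set (Fin d → ℤ))
    (hL : ∀ k : ℕ, L k = (fun s => s + k • a) '' (S : Set (Fin d → ℤ)) \
        (fun s => s + (k + 1) • a) '' (S : Set (Fin d → ℤ))) :
    Pairwise (Function.onFun Disjoint L) ∧
    ∀ k : ℕ, k • a ∈ L k ∧
      (fun s => s + k • a) '' (S : Set (Fin d → ℤ)) = ⋃ m ∈ {m : ℕ | k ≤ m}, L m := by
  have haS : a ∈ S := hgen ▸ ha ▸ AddSubmonoid.sum_mem _ fun i _ =>
    AddSubmonoid.subset_closure (mem_range_self i)
  have hS : ∀ t ∈ S, ∃ n : ℕ, n • a - t ∈ S := by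
    subst hgen ha
    refine fun t => AddSubmonoid.exists_nsmul_sub_mem_closure ?_
    rintro _ ⟨i, rfl⟩
    exact AddSubmonoid.sum_sub_mem_closure_range e i
  have hna : -a ∉ S := fun h => hne <| S.coe_eq_univ_of_neg_mem hgrp fun _ =>
    S.neg_mem_of_neg_mem_of_exists_nsmul_sub_mem hS h
  have hT := S.antitone_image_add_nsmul haS
  obtain rfl := funext hL
  exact ⟨hT.pairwise_disjoint_sdiff_succ, fun k => ⟨S.nsmul_mem_image_add_nsmul_diff hna k,
    (hT.biUnion_sdiff_succ_eq (S.iInter_image_add_nsmul_eq_empty hS hna) k).symm⟩⟩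
end

section
/- Let S, a be as above with L_b := (S + b) \ (S + b + a) for b ∈ S. Fix k ≥ 0 and b ∈ S with b - k•a ∈ S. Then for every x ∈ L_{k•a}, the set {x + m•a : m ∈ ℕ} ∩ L_b is a singleton. -/
/-! With `c := x - b`, a point `x + m • a` (which lies in `S`) belongs to `L_b` iff `c + m • a ∈ S`
and `c + m • a - a ∉ S`. As `a ∈ S`, the `m` with `c + m • a ∈ S` form an up-set of `ℕ`, so exactly one
`m` qualifies, its least element, provided the up-set is nonempty and `c - a ∉ S`. It is nonempty since
`a = e₁ + ⋯ + e_r` dominates `S` (`m • a - t ∈ S` for every `t ∈ S` and some `m`), applied to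
`t = b - k • a` together with `x - k • a ∈ S`; and `c - a ∈ S` would give
`x - (k + 1) • a = (c - a) + (b - k • a) ∈ S`. -/

namespace AddSubmonoid

variable {G : Type*} [AddCommGroup G]

theorem sum_mem_closure_range {ι : Type*} [Fintype ι] (e : ι → G) :
    ∑ i, e i ∈ closure (Set.range e) :=
  _root_.sum_mem fun i _ => subset_closure ⟨i, rfl⟩

theorem exists_nsmul_sum_sub_mem_closure_range {ι : Type*} [Fintype ι] [DecidableEq ι]
    (e : ι → G) {t : G} (ht : t ∈ closure (Set.range e)) :
    ∃ m : ℕ, m • ∑ i, e i - t ∈ closure (Set.range e) := by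
  induction ht using closure_induction with
  | mem _ hx =>
    obtain ⟨i, rfl⟩ := hx
    refine ⟨1, ?_⟩
    rw [one_smul, ← Finset.sum_erase_eq_sub (Finset.mem_univ i)]
    exact _root_.sum_mem fun j _ => subset_closure ⟨j, rfl⟩
  | zero => exact ⟨0, by simp⟩
  | add x y _ _ hx hy =>
    obtain ⟨m, hm⟩ := hx
    obtain ⟨n, hn⟩ := hy
    refine ⟨m + n, ?_⟩
    convert add_mem hm hn using 1
    rw [add_nsmul]
    abel

variable {S : AddSubmonoid G} {a : G}

theorem existsUnique_add_nsmul_mem_and_sub_notMem (haS : a ∈ S) {c : G}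
    (hex : ∃ n : ℕ, c + n • a ∈ S) (hc : c - a ∉ S) :
    ∃! m : ℕ, c + m • a ∈ S ∧ c + m • a - a ∉ S := by
  classical
  have add_succ_nsmul_sub (n : ℕ) : c + (n + 1) • a - a = c + n • a := by
    rw [succ_nsmul, ← add_assoc, add_sub_cancel_right]
  refine ⟨Nat.find hex, ⟨Nat.find_spec hex, ?_⟩, ?_⟩
  · match h : Nat.find hex with
    | 0 => simpa using hc
    | n + 1 =>
      rw [add_succ_nsmul_sub]
      exact Nat.find_min hex (h ▸ n.lt_succ_self)
  · rintro m ⟨hm, hm'⟩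
    refine le_antisymm ?_ (Nat.find_min' hex hm)
    by_contra! hlt
    obtain ⟨n, rfl⟩ := Nat.exists_eq_add_of_lt hlt
    rw [add_succ_nsmul_sub, add_nsmul, ← add_assoc] at hm'
    exact hm' (add_mem (Nat.find_spec hex) (nsmul_mem haS n))

end AddSubmonoid

theorem Set.mem_image_add_right_iff_sub_mem {G : Type*} [AddGroup G] {T : Set G} {y z : G} :
    y ∈ (fun s => s + z) '' T ↔ y - z ∈ T := by
  rw [Set.image_add_right, Set.mem_preimage, sub_eq_add_neg]

theorem Set.mem_image_add_add_right_iff_sub_sub_mem {G : Type*} [AddCommGroup G] {T : Set G}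
    {y z a : G} : y ∈ (fun s => s + z + a) '' T ↔ y - z - a ∈ T := by
  simp only [add_assoc, Set.mem_image_add_right_iff_sub_mem, sub_add_eq_sub_sub]

theorem stmt_8_general (d r : ℕ) (S : AddSubmonoid (Fin d → ℤ)) (e : Fin r → (Fin d → ℤ))
    (hgen : S = AddSubmonoid.closure (Set.range e))
    (a : Fin d → ℤ) (ha : a = ∑ i, e i)
    (Lz : (Fin d → ℤ) → Set (Fin d → ℤ))
    (hLz : ∀ z : Fin d → ℤ, Lz z =
      ((fun s => s + z) '' (S : Set (Fin d → ℤ)) \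
        (fun s => s + z + a) '' (S : Set (Fin d → ℤ))) ∩ (S : Set (Fin d → ℤ)))
    (k : ℕ) (b : Fin d → ℤ) (hbk : b - k • a ∈ S) :
    ∀ x ∈ Lz (k • a), ∃! y : Fin d → ℤ, (∃ m : ℕ, y = x + m • a) ∧ y ∈ Lz b := by
  have haS : a ∈ S := by
    subst hgen ha
    exact AddSubmonoid.sum_mem_closure_range e
  obtain ⟨n, hn⟩ : ∃ n : ℕ, n • a - (b - k • a) ∈ S := by
    subst hgen ha
    exact AddSubmonoid.exists_nsmul_sum_sub_mem_closure_range e hbk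
  intro x hx
  simp only [hLz, Set.mem_inter_iff, Set.mem_sdiff, Set.mem_image_add_right_iff_sub_mem,
    Set.mem_image_add_add_right_iff_sub_sub_mem, SetLike.mem_coe] at hx ⊢
  obtain ⟨⟨hxk, hxk'⟩, hxS⟩ := hx
  have hex : ∃ n : ℕ, x - b + n • a ∈ S := ⟨n, by convert add_mem hxk hn using 1; abel⟩
  have hc : x - b - a ∉ S := fun h => hxk' (by convert add_mem h hbk using 1; abel)
  obtain ⟨m, hm, huniq⟩ := AddSubmonoid.existsUnique_add_nsmul_mem_and_sub_notMem haS hex hc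
  simp only [← add_sub_right_comm] at hm huniq
  refine ⟨x + m • a, ⟨⟨m, rfl⟩, hm, add_mem hxS (nsmul_mem haS m)⟩, ?_⟩
  rintro _ ⟨⟨m', rfl⟩, hm', -⟩
  rw [huniq m' hm']

theorem stmt_8 (d r : ℕ) (S : AddSubmonoid (Fin d → ℤ)) (e : Fin r → (Fin d → ℤ))
    (hgen : S = AddSubmonoid.closure (Set.range e))
    (hgrp : ∀ x : Fin d → ℤ, ∃ s ∈ S, ∃ t ∈ S, x = s - t)
    (hne : (S : Set (Fin d → ℤ)) ≠ Set.univ)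
    (a : Fin d → ℤ) (ha : a = ∑ i, e i)
    (Lz : (Fin d → ℤ) → Set (Fin d → ℤ))
    (hLz : ∀ z : Fin d → ℤ, Lz z =
      ((fun s => s + z) '' (S : Set (Fin d → ℤ)) \
        (fun s => s + z + a) '' (S : Set (Fin d → ℤ))) ∩ (S : Set (Fin d → ℤ)))
    (k : ℕ) (b : Fin d → ℤ) (hb : b ∈ S) (hbk : b - k • a ∈ S) :
    ∀ x ∈ Lz (k • a), ∃! y : Fin d → ℤ, (∃ m : ℕ, y = x + m • a) ∧ y ∈ Lz b :=
  stmt_8_general d r S e hgen a ha Lz hLz k b hbk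
end

section
/- With S, a as above, for any b ∈ S and k ≥ 0 with b - k•a ∈ S, and any y ∈ (S + b) \ (S + b + a), the set {m ∈ ℕ : y - m•a ∈ S + k•a} is nonempty and bounded above. -/
/-! The sum `a` of the generators dominates every element of `S`: each generator `eᵢ` satisfies
`a - eᵢ ∈ S`, so every `t ∈ S` has `N • a - t ∈ S` for some `N`. Together with `S - S = ℤ^d` this
makes every `z` land in `S` after adding a multiple of `a`. The set of admissible `m` contains
`0` because `b - k • a ∈ S`. It is closed downwards, since `a ∈ S`, so if it were unbounded it
would contain every `m`, and then every `z` would lie in `S`, contradicting `S ≠ ℤ^d`. -/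

namespace AddSubmonoid

variable {G : Type*} [AddCommGroup G]

theorem exists_nsmul_sum_sub_mem_closure_s10 {ι : Type*} [Fintype ι] (e : ι → G) {t : G}
    (ht : t ∈ closure (Set.range e)) :
    ∃ N : ℕ, N • (∑ i, e i) - t ∈ closure (Set.range e) := by
  classical
  have he : ∀ i, e i ∈ closure (Set.range e) := fun i => subset_closure (Set.mem_range_self i)
  induction ht using closure_induction with
  | mem x hx =>
    obtain ⟨i, rfl⟩ := hx
    refine ⟨1, ?_⟩
    rw [one_smul, ← Finset.add_sum_erase _ _ (Finset.mem_univ i), add_sub_cancel_left]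
    exact _root_.sum_mem fun j _ => he j
  | zero => exact ⟨0, by simp⟩
  | add x y _ _ ihx ihy =>
    obtain ⟨N₁, h₁⟩ := ihx
    obtain ⟨N₂, h₂⟩ := ihy
    refine ⟨N₁ + N₂, ?_⟩
    have hsplit : (N₁ + N₂) • (∑ i, e i) - (x + y) =
        (N₁ • (∑ i, e i) - x) + (N₂ • (∑ i, e i) - y) := by
      rw [add_smul]; abel
    rw [hsplit]
    exact add_mem h₁ h₂

theorem exists_add_nsmul_mem {S : AddSubmonoid G} {a : G}
    (hgrp : ∀ x : G, ∃ s ∈ S, ∃ t ∈ S, x = s - t) (hdom : ∀ t ∈ S, ∃ N : ℕ, N • a - t ∈ S)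
    (z : G) : ∃ N : ℕ, z + N • a ∈ S := by
  obtain ⟨s, hs, t, ht, rfl⟩ := hgrp z
  obtain ⟨N, hN⟩ := hdom t ht
  refine ⟨N, ?_⟩
  rw [show s - t + N • a = s + (N • a - t) by abel]
  exact add_mem hs hN

theorem bddAbove_setOf_sub_nsmul_sub_mem {S : AddSubmonoid G} {a : G} (hS : S ≠ ⊤) (ha : a ∈ S)
    (habs : ∀ z : G, ∃ N : ℕ, z + N • a ∈ S) (y c : G) :
    BddAbove {m : ℕ | y - m • a - c ∈ S} := by
  by_contra hunb
  rw [not_bddAbove_iff] at hunb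
  refine hS (eq_top_iff.mpr fun x _ => ?_)
  obtain ⟨N, hN⟩ := habs (x - y + c)
  obtain ⟨m, hm, hNm⟩ := hunb N
  have hmN : y - N • a - c = (y - m • a - c) + (m - N) • a := by
    rw [← Nat.sub_add_cancel hNm.le, add_smul, Nat.add_sub_cancel]; abel
  have hN' : y - N • a - c ∈ S := hmN ▸ add_mem hm (nsmul_mem ha _)
  rw [show x = (x - y + c + N • a) + (y - N • a - c) by abel]
  exact add_mem hN hN'

end AddSubmonoid

theorem stmt_10_general (d r : ℕ) (S : AddSubmonoid (Fin d → ℤ)) (e : Fin r → (Fin d → ℤ))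
    (hgen : S = AddSubmonoid.closure (Set.range e))
    (hgrp : ∀ x : Fin d → ℤ, ∃ s ∈ S, ∃ t ∈ S, x = s - t)
    (hne : (S : Set (Fin d → ℤ)) ≠ Set.univ)
    (a : Fin d → ℤ) (ha : a = ∑ i, e i)
    (k : ℕ) (b : Fin d → ℤ) (hbk : b - k • a ∈ S) :
    ∀ y ∈ (fun s => s + b) '' (S : Set (Fin d → ℤ)) \
        (fun s => s + b + a) '' (S : Set (Fin d → ℤ)),
      ({m : ℕ | y - m • a ∈ (fun s => s + k • a) '' (S : Set (Fin d → ℤ))}).Nonempty ∧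
      BddAbove {m : ℕ | y - m • a ∈ (fun s => s + k • a) '' (S : Set (Fin d → ℤ))} := by
  rintro y ⟨⟨s, hs, rfl⟩, -⟩
  subst hgen ha
  have haS : ∑ i, e i ∈ AddSubmonoid.closure (Set.range e) :=
    sum_mem fun i _ => AddSubmonoid.subset_closure (Set.mem_range_self i)
  have habs : ∀ z, ∃ N : ℕ, z + N • ∑ i, e i ∈ AddSubmonoid.closure (Set.range e) :=
    AddSubmonoid.exists_add_nsmul_mem hgrp fun _ => AddSubmonoid.exists_nsmul_sum_sub_mem_closure_s10 e
  have hS : AddSubmonoid.closure (Set.range e) ≠ ⊤ := fun h => hne (by rw [h, AddSubmonoid.coe_top])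
  simp only [Set.image_add_right, ← sub_eq_add_neg]
  refine ⟨⟨0, ?_⟩, AddSubmonoid.bddAbove_setOf_sub_nsmul_sub_mem hS haS habs _ _⟩
  show s + b - 0 • _ - k • _ ∈ AddSubmonoid.closure _
  rw [zero_smul, sub_zero, add_sub_assoc]
  exact add_mem hs hbk

theorem stmt_10 (d r : ℕ) (S : AddSubmonoid (Fin d → ℤ)) (e : Fin r → (Fin d → ℤ))
    (hgen : S = AddSubmonoid.closure (Set.range e))
    (hgrp : ∀ x : Fin d → ℤ, ∃ s ∈ S, ∃ t ∈ S, x = s - t)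
    (hne : (S : Set (Fin d → ℤ)) ≠ Set.univ)
    (a : Fin d → ℤ) (ha : a = ∑ i, e i)
    (k : ℕ) (b : Fin d → ℤ) (hb : b ∈ S) (hbk : b - k • a ∈ S) :
    ∀ y ∈ (fun s => s + b) '' (S : Set (Fin d → ℤ)) \
        (fun s => s + b + a) '' (S : Set (Fin d → ℤ)),
      ({m : ℕ | y - m • a ∈ (fun s => s + k • a) '' (S : Set (Fin d → ℤ))}).Nonempty ∧
      BddAbove {m : ℕ | y - m • a ∈ (fun s => s + k • a) '' (S : Set (Fin d → ℤ))} :=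
  stmt_10_general d r S e hgen hgrp hne a ha k b hbk
end

section
/- With S, a as above, suppose x ∈ (S + k•a) \ (S + (k+1)•a) and m₁ < m₂ are natural numbers. Then it is impossible that both x + m₁•a and x + m₂•a lie in (S + b) \ (S + b + a), for any b ∈ ℤ^d. -/
theorem stmt_11 (d r : ℕ) (S : AddSubmonoid (Fin d → ℤ)) (e : Fin r → (Fin d → ℤ))
    (hgen : S = AddSubmonoid.closure (Set.range e))
    (hgrp : ∀ x : Fin d → ℤ, ∃ s ∈ S, ∃ t ∈ S, x = s - t)
    (hne : (S : Set (Fin d → ℤ)) ≠ Set.univ)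
    (a : Fin d → ℤ) (ha : a = ∑ i, e i)
    (k m₁ m₂ : ℕ) (hm : m₁ < m₂) (b x : Fin d → ℤ)
    (hx : x ∈ (fun s => s + k • a) '' (S : Set (Fin d → ℤ)) \
        (fun s => s + (k + 1) • a) '' (S : Set (Fin d → ℤ))) :
    ¬ (x + m₁ • a ∈ (fun s => s + b) '' (S : Set (Fin d → ℤ)) \
          (fun s => s + b + a) '' (S : Set (Fin d → ℤ)) ∧
       x + m₂ • a ∈ (fun s => s + b) '' (S : Set (Fin d → ℤ)) \
          (fun s => s + b + a) '' (S : Set (Fin d → ℤ))) := by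
  have haS : a ∈ S := by
    rw [hgen, ha]
    exact AddSubmonoid.sum_mem _ fun i _ => AddSubmonoid.subset_closure ⟨i, rfl⟩
  rintro ⟨⟨⟨s₁, hs₁, heq₁⟩, -⟩, ⟨-, hn₂⟩⟩
  obtain ⟨n, rfl⟩ : ∃ n, m₂ = m₁ + n + 1 := ⟨m₂ - m₁ - 1, by omega⟩
  apply hn₂
  refine ⟨s₁ + n • a, S.add_mem hs₁ (AddSubmonoid.nsmul_mem S haS n), ?_⟩
  simp only at heq₁ ⊢
  have : (m₁ + n + 1) • a = m₁ • a + n • a + a := by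
    rw [add_smul, add_smul, one_smul]
  rw [this, ← add_assoc, ← add_assoc, ← heq₁]
  abel
end

section
/- Every multiplier (2-cocycle with values in the circle group 𝕋) on a finitely generated subsemigroup S of ℤ^d with S - S = ℤ^d extends to a multiplier on ℤ^d. That is, if ω : S × S → 𝕋 satisfies ω(r,s)ω(r+s,t) = ω(r,s+t)ω(s,t) for all r,s,t ∈ S, then there exists ω̃ : ℤ^d × ℤ^d → 𝕋 satisfying the same cocycle identity on ℤ^d and restricting to ω on S × S. -/
/-!
The commutator `ω x y - ω y x` of a cocycle on `S` is biadditive. Since `S - S = ℤ^d` it extends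
to an alternating biadditive form on `ℤ^d`, and every such form is `B x y - B y x` for the
biadditive `B` given by the strictly upper triangular part of its matrix. Then `ω - B` is a
symmetric cocycle on `S`, i.e. it defines a commutative extension of `S` by the coefficients.
Choose `pᵢ, qᵢ ∈ S` with `pᵢ - qᵢ = eᵢ`. For `u ∈ S` and `a - c = u`, the points
`u + ∑ (cᵢ pᵢ + aᵢ qᵢ)` and `∑ (aᵢ pᵢ + cᵢ qᵢ)` coincide, so their lifts to the extension differ
by a coefficient `b u`, independent of `(a, c)`; comparing lifts gives `ω - B = δb`. Hence
`B + δb'`, with `b'` the extension of `b` by zero, is a cocycle on `ℤ^d` extending `ω`.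
-/

open Finset

section Cocycle

variable {P A : Type*} [AddCommMonoid P] [AddCommGroup A]

def IsTwoCocycle (ω : P → P → A) : Prop :=
  ∀ r s t, ω r s + ω (r + s) t = ω r (s + t) + ω s t

namespace IsTwoCocycle

variable {ω ω' : P → P → A}

theorem add (hω : IsTwoCocycle ω) (hω' : IsTwoCocycle ω') :
    IsTwoCocycle fun x y => ω x y + ω' x y := fun r s t => by
  dsimp only
  linear_combination (norm := abel) hω r s t + hω' r s t

theorem sub (hω : IsTwoCocycle ω) (hω' : IsTwoCocycle ω') :
    IsTwoCocycle fun x y => ω x y - ω' x y := fun r s t => by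
  dsimp only
  linear_combination (norm := abel) hω r s t - hω' r s t

theorem add_left_sub_swap (hω : IsTwoCocycle ω) (r s t : P) :
    ω (r + s) t - ω t (r + s) = (ω r t - ω t r) + (ω s t - ω t s) := by
  have h₁ := hω r s t
  have h₂ := hω r t s
  have h₃ := hω t r s
  rw [add_comm t s] at h₂
  rw [add_comm t r] at h₃
  linear_combination (norm := abel) h₁ - h₂ + h₃

def commutatorForm (hω : IsTwoCocycle ω) : P →+ P →+ A :=
  AddMonoidHom.mk'
    (fun x => AddMonoidHom.mk' (fun y => ω x y - ω y x) fun y z => by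
      linear_combination (norm := abel) -hω.add_left_sub_swap y z x)
    fun x y => by ext z; exact hω.add_left_sub_swap x y z

@[simp]
theorem commutatorForm_apply (hω : IsTwoCocycle ω) (x y : P) :
    hω.commutatorForm x y = ω x y - ω y x := rfl

end IsTwoCocycle

theorem AddMonoidHom.isTwoCocycle (β : P →+ P →+ A) : IsTwoCocycle fun x y => β x y :=
  fun r s t => by simp only [map_add, AddMonoidHom.add_apply]; abel

theorem isTwoCocycle_coboundary (b : P → A) :
    IsTwoCocycle fun x y => b x + b y - b (x + y) :=
  fun r s t => by dsimp only; rw [← add_assoc]; abel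

end Cocycle

section Extension

variable {G A : Type*} [AddCommGroup G] [AddCommGroup A] {S : AddSubmonoid G}

theorem AddMonoidHom.restrict_injective_of_forall_eq_sub
    (hS : ∀ x : G, ∃ a ∈ S, ∃ b ∈ S, x = a - b) :
    Function.Injective (AddMonoidHom.compHom' S.subtype : (G →+ A) →+ (S →+ A)) := by
  intro F F' h
  ext x
  obtain ⟨a, ha, b, hb, rfl⟩ := hS x
  have h' (c : G) (hc : c ∈ S) : F c = F' c := DFunLike.congr_fun h ⟨c, hc⟩
  rw [map_sub, map_sub, h' a ha, h' b hb]

theorem AddMonoidHom.restrict_surjective_of_forall_eq_sub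
    (hS : ∀ x : G, ∃ a ∈ S, ∃ b ∈ S, x = a - b) :
    Function.Surjective (AddMonoidHom.compHom' S.subtype : (G →+ A) →+ (S →+ A)) := by
  intro f
  choose a ha b hb hab using hS
  let F (x : G) : A := f ⟨a x, ha x⟩ - f ⟨b x, hb x⟩
  have hF (x c d : G) (hc : c ∈ S) (hd : d ∈ S) (hx : x = c - d) :
      F x = f ⟨c, hc⟩ - f ⟨d, hd⟩ := by
    have hsum : (⟨a x, ha x⟩ + ⟨d, hd⟩ : S) = ⟨c, hc⟩ + ⟨b x, hb x⟩ :=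
      Subtype.ext <| by
        simp only [AddSubmonoid.coe_add]
        rw [← sub_eq_sub_iff_add_eq_add, ← hab, hx]
    have := congrArg f hsum
    rw [map_add, map_add] at this
    show f _ - f _ = _
    linear_combination (norm := abel) this
  refine ⟨AddMonoidHom.mk' F fun x y => ?_, ?_⟩
  · rw [hF (x + y) _ _ (S.add_mem (ha x) (ha y)) (S.add_mem (hb x) (hb y))
      (by rw [← sub_add_sub_comm, ← hab, ← hab])]
    show f (⟨a x, ha x⟩ + ⟨a y, ha y⟩) - f (⟨b x, hb x⟩ + ⟨b y, hb y⟩) =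
      (f _ - f _) + (f _ - f _)
    rw [map_add, map_add]
    abel
  · ext c
    exact (hF c c 0 c.2 S.zero_mem (sub_zero _).symm).trans (sub_eq_self.mpr (map_zero f))

noncomputable def AddMonoidHom.restrictEquivOfForallEqSub
    (hS : ∀ x : G, ∃ a ∈ S, ∃ b ∈ S, x = a - b) : (G →+ A) ≃+ (S →+ A) :=
  AddEquiv.ofBijective _ ⟨restrict_injective_of_forall_eq_sub hS,
    restrict_surjective_of_forall_eq_sub hS⟩

theorem AddMonoidHom.apply_self_eq_zero_of_forall_mem
    (hS : ∀ x : G, ∃ a ∈ S, ∃ b ∈ S, x = a - b) (β : G →+ G →+ A)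
    (hβ : ∀ c ∈ S, β c c = 0) (x : G) : β x x = 0 := by
  obtain ⟨a, ha, b, hb, rfl⟩ := hS x
  have hab := hβ (a + b) (S.add_mem ha hb)
  simp only [map_add, map_sub, AddMonoidHom.add_apply, AddMonoidHom.sub_apply, hβ a ha,
    hβ b hb] at hab ⊢
  linear_combination (norm := abel) -hab

variable (hS : ∀ x : G, ∃ a ∈ S, ∃ b ∈ S, x = a - b)

@[simp]
theorem AddMonoidHom.restrictEquivOfForallEqSub_symm_apply_coe (f : S →+ A) (c : S) :
    (restrictEquivOfForallEqSub hS).symm f c = f c :=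
  DFunLike.congr_fun ((restrictEquivOfForallEqSub hS).apply_symm_apply f) c

noncomputable def AddMonoidHom.extendBiadditive (β : S →+ S →+ A) : G →+ G →+ A :=
  (restrictEquivOfForallEqSub hS).symm
    ((restrictEquivOfForallEqSub hS).symm.toAddMonoidHom.comp β)

@[simp]
theorem AddMonoidHom.extendBiadditive_apply_coe (β : S →+ S →+ A) (c d : S) :
    extendBiadditive hS β c d = β c d := by
  simp [extendBiadditive]

end Extension

structure SymmTwoCocycle (P A : Type*) [AddCommMonoid P] [AddCommGroup A] where
  toFun : P → P → A
  isTwoCocycle : IsTwoCocycle toFun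
  symm : ∀ a b, toFun a b = toFun b a
  zero_left : ∀ a, toFun 0 a = 0

namespace SymmTwoCocycle

variable {P A : Type*} [AddCommMonoid P] [AddCommGroup A]

instance : CoeFun (SymmTwoCocycle P A) fun _ => P → P → A := ⟨toFun⟩

/-- The central extension of `P` by `A` with cocycle `σ`. -/
@[ext]
structure Twisted (σ : SymmTwoCocycle P A) where
  fst : P
  snd : A

namespace Twisted

variable {σ : SymmTwoCocycle P A}

instance : Add (Twisted σ) := ⟨fun x y => ⟨x.fst + y.fst, x.snd + y.snd + σ x.fst y.fst⟩⟩

instance : Zero (Twisted σ) := ⟨⟨0, 0⟩⟩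

@[simp] theorem fst_add (x y : Twisted σ) : (x + y).fst = x.fst + y.fst := rfl

@[simp] theorem snd_add (x y : Twisted σ) : (x + y).snd = x.snd + y.snd + σ x.fst y.fst := rfl

instance : AddCommMonoid (Twisted σ) where
  add_assoc x y z := Twisted.ext (add_assoc _ _ _) <| by
    show x.snd + y.snd + σ x.fst y.fst + z.snd + σ (x.fst + y.fst) z.fst =
      x.snd + (y.snd + z.snd + σ y.fst z.fst) + σ x.fst (y.fst + z.fst)
    linear_combination (norm := abel) σ.isTwoCocycle x.fst y.fst z.fst
  zero_add x := Twisted.ext (zero_add _) <| by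
    show 0 + x.snd + σ 0 x.fst = x.snd
    rw [σ.zero_left, zero_add, add_zero]
  add_zero x := Twisted.ext (add_zero _) <| by
    show x.snd + 0 + σ x.fst 0 = x.snd
    rw [σ.symm, σ.zero_left, add_zero, add_zero]
  add_comm x y := Twisted.ext (add_comm _ _) <| by
    show x.snd + y.snd + σ x.fst y.fst = y.snd + x.snd + σ y.fst x.fst
    rw [σ.symm, add_comm x.snd]
  nsmul := nsmulRec

instance [IsRightCancelAdd P] : IsRightCancelAdd (Twisted σ) where
  add_right_cancel w x y h := by
    have hfst : x.fst = y.fst := add_right_cancel (congrArg fst h)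
    refine Twisted.ext hfst ?_
    have hsnd := congrArg snd h
    rw [snd_add, snd_add, hfst] at hsnd
    exact add_right_cancel (add_right_cancel hsnd)

def fstHom : Twisted σ →+ P where
  toFun := fst
  map_zero' := rfl
  map_add' _ _ := rfl

def inl : A →+ Twisted σ where
  toFun z := ⟨0, z⟩
  map_zero' := rfl
  map_add' z w := Twisted.ext (add_zero 0).symm (by simp [σ.zero_left])

def of (u : P) : Twisted σ := ⟨u, 0⟩

@[simp] theorem fst_of (u : P) : (of u : Twisted σ).fst = u := rfl

@[simp] theorem fst_nsmul (n : ℕ) (x : Twisted σ) : (n • x).fst = n • x.fst :=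
  map_nsmul fstHom n x

@[simp] theorem fst_sum {κ : Type*} (s : Finset κ) (x : κ → Twisted σ) :
    (∑ k ∈ s, x k).fst = ∑ k ∈ s, (x k).fst :=
  map_sum fstHom x s

theorem inl_add (z : A) (x : Twisted σ) : inl z + x = ⟨x.fst, z + x.snd⟩ :=
  Twisted.ext (zero_add _) (by simp [inl, σ.zero_left])

theorem inl_add_right_injective (x : Twisted σ) : Function.Injective fun z => inl z + x := by
  intro z w h
  simpa [inl_add] using h

theorem eq_inl_add_of_fst_eq {x y : Twisted σ} (h : x.fst = y.fst) :
    x = inl (x.snd - y.snd) + y :=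
  Twisted.ext (by rw [inl_add, h]) (by rw [inl_add, sub_add_cancel])

theorem of_add_of (u v : P) : (of u + of v : Twisted σ) = inl (σ u v) + of (u + v) :=
  Twisted.ext (zero_add _).symm (by simp [of, inl_add])

end Twisted

end SymmTwoCocycle

section Lattice

variable {ι A : Type*} [Fintype ι] [AddCommGroup A]

theorem sum_smul_single_one [DecidableEq ι] (x : ι → ℤ) :
    ∑ i, x i • (Pi.single i 1 : ι → ℤ) = x := by
  conv_rhs => rw [← Finset.univ_sum_single x]
  refine sum_congr rfl fun i _ => ?_
  rw [← Pi.single_smul', smul_eq_mul, mul_one]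

theorem AddMonoidHom.apply_eq_sum_smul_single [DecidableEq ι] (f : (ι → ℤ) →+ A) (x : ι → ℤ) :
    f x = ∑ i, x i • f (Pi.single i 1) := by
  conv_lhs => rw [← sum_smul_single_one x]
  simp only [map_sum, map_zsmul]

def biadditiveOfMatrix (c : ι → ι → A) : (ι → ℤ) →+ (ι → ℤ) →+ A :=
  AddMonoidHom.mk'
    (fun x => AddMonoidHom.mk' (fun y => ∑ i, ∑ j, (x i * y j) • c i j) fun y y' => by
      simp only [Pi.add_apply, mul_add, add_smul, sum_add_distrib])
    fun x x' => by ext y; simp only [Pi.add_apply, add_mul, add_smul, sum_add_distrib]; rfl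

@[simp]
theorem biadditiveOfMatrix_apply (c : ι → ι → A) (x y : ι → ℤ) :
    biadditiveOfMatrix c x y = ∑ i, ∑ j, (x i * y j) • c i j := rfl

theorem AddMonoidHom.eq_biadditiveOfMatrix [DecidableEq ι] (β : (ι → ℤ) →+ (ι → ℤ) →+ A)
    (x y : ι → ℤ) :
    β x y = biadditiveOfMatrix (fun i j => β (Pi.single i 1) (Pi.single j 1)) x y := by
  rw [biadditiveOfMatrix_apply, β.apply_eq_sum_smul_single, AddMonoidHom.finsetSum_apply]
  refine sum_congr rfl fun i _ => ?_
  rw [AddMonoidHom.smul_apply, apply_eq_sum_smul_single, smul_sum]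
  simp only [mul_smul]

theorem exists_biadditive_sub_swap_eq [LinearOrder ι] (β : (ι → ℤ) →+ (ι → ℤ) →+ A)
    (hβ : ∀ x, β x x = 0) : ∃ B : (ι → ℤ) →+ (ι → ℤ) →+ A, ∀ x y, B x y - B y x = β x y := by
  have hswap (i j : ι) :
      β (Pi.single j 1) (Pi.single i 1) = -β (Pi.single i 1) (Pi.single j 1) := by
    have := hβ (Pi.single i 1 + Pi.single j 1)
    simp only [map_add, AddMonoidHom.add_apply, hβ] at this
    exact eq_neg_of_add_eq_zero_left (by simpa [add_comm] using this)
  refine ⟨biadditiveOfMatrix fun i j => if i < j then β (Pi.single i 1) (Pi.single j 1) else 0,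
    fun x y => ?_⟩
  rw [β.eq_biadditiveOfMatrix, biadditiveOfMatrix_apply, biadditiveOfMatrix_apply,
    biadditiveOfMatrix_apply, sum_comm (γ := ι) (f := fun i j => (y i * x j) • _),
    ← sum_sub_distrib]
  refine sum_congr rfl fun i _ => ?_
  rw [← sum_sub_distrib]
  refine sum_congr rfl fun j _ => ?_
  rcases lt_trichotomy i j with h | rfl | h
  · simp [h, h.not_gt]
  · simp [hβ]
  · simp [h, h.not_gt, hswap j i, mul_comm (x i)]

namespace SymmTwoCocycle.Twisted

variable {S : AddSubmonoid (ι → ℤ)} {σ : SymmTwoCocycle S A} (p q : ι → S)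

def lincomb (a c : ι → ℕ) : Twisted σ := ∑ i, (a i • of (p i) + c i • of (q i))

theorem lincomb_add (a c a' c' : ι → ℕ) :
    (lincomb p q (a + a') (c + c') : Twisted σ) = lincomb p q a c + lincomb p q a' c' := by
  simp only [lincomb, ← sum_add_distrib, Pi.add_apply, add_nsmul]
  exact sum_congr rfl fun i _ => by abel

theorem coe_fst_lincomb (a c : ι → ℕ) :
    ((lincomb p q a c : Twisted σ).fst : ι → ℤ) =
      ∑ i, ((a i : ℤ) • (p i : ι → ℤ) + (c i : ℤ) • q i) := by
  simp [lincomb]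

variable [DecidableEq ι]

theorem fst_of_add_lincomb (hpq : ∀ i, (p i : ι → ℤ) - (q i : ι → ℤ) = Pi.single i 1) (u : S)
    {a c : ι → ℕ} (h : ∀ i, (a i : ℤ) - c i = (u : ι → ℤ) i) :
    (of u + lincomb p q c a : Twisted σ).fst = (lincomb p q a c : Twisted σ).fst := by
  apply Subtype.ext
  rw [fst_add, fst_of, AddSubmonoid.coe_add, coe_fst_lincomb, coe_fst_lincomb]
  conv_lhs => rw [← sum_smul_single_one (u : ι → ℤ)]
  rw [← sum_add_distrib]
  refine sum_congr rfl fun i _ => ?_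
  rw [← h, ← hpq]
  module

end SymmTwoCocycle.Twisted

open SymmTwoCocycle.Twisted in
theorem SymmTwoCocycle.exists_eq_coboundary [DecidableEq ι] {S : AddSubmonoid (ι → ℤ)}
    (σ : SymmTwoCocycle S A) (p q : ι → S)
    (hpq : ∀ i, (p i : ι → ℤ) - (q i : ι → ℤ) = Pi.single i 1) :
    ∃ b : S → A, ∀ u v, σ u v = b u + b v - b (u + v) := by
  let L (a c : ι → ℕ) : Twisted σ := lincomb p q a c
  let a₀ (u : S) (i : ι) : ℕ := ((u : ι → ℤ) i).toNat
  let c₀ (u : S) (i : ι) : ℕ := (-(u : ι → ℤ) i).toNat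
  have h₀ (u : S) (i : ι) : (a₀ u i : ℤ) - c₀ u i = (u : ι → ℤ) i := Int.toNat_sub_toNat_neg _
  let b (u : S) : A := (of u + L (c₀ u) (a₀ u)).snd - (L (a₀ u) (c₀ u)).snd
  have hb (u : S) {a c : ι → ℕ} (h : ∀ i, (a i : ℤ) - c i = (u : ι → ℤ) i) :
      of u + L c a = inl (b u) + L a c := by
    have hcanon : of u + L (c₀ u) (a₀ u) = inl (b u) + L (a₀ u) (c₀ u) :=
      eq_inl_add_of_fst_eq (fst_of_add_lincomb p q hpq u (h₀ u))
    have hac : a + c₀ u = a₀ u + c := by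
      funext i; have := h i; have := h₀ u i; simp only [Pi.add_apply]; omega
    have hca : c + a₀ u = c₀ u + a := by
      funext i; have := h i; have := h₀ u i; simp only [Pi.add_apply]; omega
    apply add_right_cancel (b := L (a₀ u) (c₀ u))
    calc of u + L c a + L (a₀ u) (c₀ u)
        = of u + L (c₀ u) (a₀ u) + L a c := by
          simp only [L, add_assoc, ← lincomb_add, hca, hac]
      _ = inl (b u) + L a c + L (a₀ u) (c₀ u) := by rw [hcanon, add_right_comm]
  refine ⟨b, fun u v => ?_⟩
  have key : inl (b u + b v) + L (a₀ u + a₀ v) (c₀ u + c₀ v) =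
      inl (σ u v + b (u + v)) + L (a₀ u + a₀ v) (c₀ u + c₀ v) :=
    calc inl (b u + b v) + L (a₀ u + a₀ v) (c₀ u + c₀ v)
        = (inl (b u) + L (a₀ u) (c₀ u)) + (inl (b v) + L (a₀ v) (c₀ v)) := by
          simp only [L, map_add, lincomb_add]; abel
      _ = (of u + of v) + L (c₀ u + c₀ v) (a₀ u + a₀ v) := by
          rw [← hb u (h₀ u), ← hb v (h₀ v)]; simp only [L, lincomb_add]; abel
      _ = inl (σ u v) + (of (u + v) + L (c₀ u + c₀ v) (a₀ u + a₀ v)) := by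
          rw [of_add_of, add_assoc]
      _ = inl (σ u v + b (u + v)) + L (a₀ u + a₀ v) (c₀ u + c₀ v) := by
          rw [hb (u + v) fun i => ?_, map_add, add_assoc]
          simp only [Pi.add_apply, Nat.cast_add, AddSubmonoid.coe_add, ← h₀ u i, ← h₀ v i]
          ring
  rw [inl_add_right_injective _ key, add_sub_cancel_right]

end Lattice

section CocycleExtension

variable {ι A : Type*} [Fintype ι] [LinearOrder ι] [AddCommGroup A] {S : AddSubmonoid (ι → ℤ)}

theorem IsTwoCocycle.exists_biadditive_sub_symm (hS : ∀ x, ∃ a ∈ S, ∃ b ∈ S, x = a - b)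
    {ω : S → S → A} (hω : IsTwoCocycle ω) :
    ∃ B : (ι → ℤ) →+ (ι → ℤ) →+ A, ∀ a b : S, ω a b - B a b = ω b a - B b a := by
  let χ := AddMonoidHom.extendBiadditive hS hω.commutatorForm
  have hχ : ∀ x, χ x x = 0 := χ.apply_self_eq_zero_of_forall_mem hS fun c hc =>
    (AddMonoidHom.extendBiadditive_apply_coe hS _ ⟨c, hc⟩ ⟨c, hc⟩).trans (sub_self _)
  obtain ⟨B, hB⟩ := exists_biadditive_sub_swap_eq χ hχ
  refine ⟨B, fun a b => ?_⟩
  have hab := hB a b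
  rw [AddMonoidHom.extendBiadditive_apply_coe, IsTwoCocycle.commutatorForm_apply] at hab
  linear_combination (norm := abel) -hab

theorem IsTwoCocycle.exists_extension (hS : ∀ x, ∃ a ∈ S, ∃ b ∈ S, x = a - b)
    {ω : S → S → A} (hω : IsTwoCocycle ω) (hω₀ : ∀ a, ω 0 a = 0) :
    ∃ W : (ι → ℤ) → (ι → ℤ) → A,
      IsTwoCocycle W ∧ (∀ x, W 0 x = 0 ∧ W x 0 = 0) ∧ ∀ a b : S, W a b = ω a b := by
  obtain ⟨B, hB⟩ := hω.exists_biadditive_sub_symm hS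
  let σ : SymmTwoCocycle S A :=
    { toFun := fun a b => ω a b - B a b
      isTwoCocycle := hω.sub fun r s t => B.isTwoCocycle r s t
      symm := hB
      zero_left := fun a => by simp [hω₀] }
  choose p hp q hq hpq using fun i => hS (Pi.single i 1)
  obtain ⟨b, hb⟩ := σ.exists_eq_coboundary (fun i => ⟨p i, hp i⟩) (fun i => ⟨q i, hq i⟩)
    fun i => (hpq i).symm
  have hb₀ : b 0 = 0 := by
    have h00 := hb 0 0
    rw [σ.zero_left, add_zero, add_sub_cancel_right] at h00
    exact h00.symm
  let b' : (ι → ℤ) → A := Function.extend Subtype.val b 0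
  have hb' (a : S) : b' a = b a := Subtype.val_injective.extend_apply b 0 a
  have hb'₀ : b' 0 = 0 := (hb' 0).trans hb₀
  refine ⟨fun x y => B x y + (b' x + b' y - b' (x + y)),
    B.isTwoCocycle.add (isTwoCocycle_coboundary b'), fun x => by simp [hb'₀], fun a c => ?_⟩
  show B a c + (b' a + b' c - b' (a + c)) = ω a c
  rw [hb', hb', ← AddSubmonoid.coe_add, hb', ← hb a c]
  show B a c + (ω a c - B a c) = ω a c
  abel

end CocycleExtension

theorem stmt_12_general (d : ℕ) (S : AddSubmonoid (Fin d → ℤ))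
    (hgrp : ∀ x : Fin d → ℤ, ∃ s ∈ S, ∃ t ∈ S, x = s - t)
    (ω : (Fin d → ℤ) → (Fin d → ℤ) → Circle)
    (hcoc : ∀ r s t : Fin d → ℤ, r ∈ S → s ∈ S → t ∈ S →
      ω r s * ω (r + s) t = ω r (s + t) * ω s t)
    (hnorm : ∀ x ∈ S, ω 0 x = 1 ∧ ω x 0 = 1) :
    ∃ W : (Fin d → ℤ) → (Fin d → ℤ) → Circle,
      (∀ r s t : Fin d → ℤ, W r s * W (r + s) t = W r (s + t) * W s t) ∧
      (∀ x : Fin d → ℤ, W 0 x = 1 ∧ W x 0 = 1) ∧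
      (∀ r ∈ S, ∀ s ∈ S, W r s = ω r s) := by
  obtain ⟨W, hW, hW₀, hWS⟩ := IsTwoCocycle.exists_extension hgrp
    (ω := fun a b : S => Additive.ofMul (ω a b))
    (fun a b c => congrArg Additive.ofMul (hcoc a b c a.2 b.2 c.2))
    fun a => congrArg Additive.ofMul (hnorm a a.2).1
  exact ⟨fun x y => (W x y).toMul, fun r s t => congrArg Additive.toMul (hW r s t),
    fun x => by simp [hW₀], fun r hr s hs => congrArg Additive.toMul (hWS ⟨r, hr⟩ ⟨s, hs⟩)⟩

theorem stmt_12 (d : ℕ) (S : AddSubmonoid (Fin d → ℤ)) (hfg : S.FG)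
    (hgrp : ∀ x : Fin d → ℤ, ∃ s ∈ S, ∃ t ∈ S, x = s - t)
    (ω : (Fin d → ℤ) → (Fin d → ℤ) → Circle)
    (hcoc : ∀ r s t : Fin d → ℤ, r ∈ S → s ∈ S → t ∈ S →
      ω r s * ω (r + s) t = ω r (s + t) * ω s t)
    (hnorm : ∀ x ∈ S, ω 0 x = 1 ∧ ω x 0 = 1) :
    ∃ W : (Fin d → ℤ) → (Fin d → ℤ) → Circle,
      (∀ r s t : Fin d → ℤ, W r s * W (r + s) t = W r (s + t) * W s t) ∧
      (∀ x : Fin d → ℤ, W 0 x = 1 ∧ W x 0 = 1) ∧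
      (∀ r ∈ S, ∀ s ∈ S, W r s = ω r s) :=
  stmt_12_general d S hgrp ω hcoc hnorm
end
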